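/- Let q > 2 be a prime power and A = 𝔽_q[T]. Suppose ℘ ∈ A and P = ℘ + 1 are both monic irreducible polynomials of degree n ≥ 2. Then P divides C_℘(1), and C_℘(1) is not irreducible in A. -/

import Mathlib

/-!
Write `C_m(x) = ∑ᵢ [m, i] x ^ q ^ i`. Comparing `C_{T^(k+1)} = C_{T^k} ∘ C_T` with
`C_{T^(k+1)} = C_T ∘ C_{T^k}` gives `[m, 0] = m`, `[m, deg m] = lc m` and
`[m, i] ^ q - [m, i] = (T ^ q ^ (i + 1) - T) [m, i + 1]`.
For `P` irreducible of degree `n`, `T ^ q ^ j - T` is prime to `P` when `0 < j < n` (as `n ∤ j`),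
so by the recursion `P ∣ [P, i]` for `i < n`; hence `C_P(1) ≡ [P, n] = 1 (mod P)` and
`P = ℘ + 1` divides `C_℘(1) = C_P(1) - 1`. The same recursion gives
`deg [m, i] = (deg m - i) q ^ i`, so for `q ≥ 3` the term `i = n - 1` dominates and
`deg C_℘(1) = q ^ (n - 1) > n = deg P`.
-/
open Polynomial

/-- Compositional iterates of the Carlitz polynomial `C_T(x) = T·x + x^q`, so that
`carlitzTpow F n = C_{T^n}(x) ∈ (𝔽_q[T])[x]` (here `q = Fintype.card F`). -/
noncomputable def carlitzTpow (F : Type) [Field F] [Fintype F] : ℕ → Polynomial (Polynomial F)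
  | 0 => X
  | n + 1 => (carlitzTpow F n).comp (Polynomial.C Polynomial.X * X + X ^ (Fintype.card F))

/-- The Carlitz module polynomial `C_m(x) ∈ (𝔽_q[T])[x]` for `m ∈ A = 𝔽_q[T]`:
it is determined by `𝔽_q`-linearity in `m` together with
`C_{T^n}(x) = C_T(C_T(⋯ C_T(x)⋯))` (`n`-fold composition of `C_T(x) = T·x + x^q`). -/
noncomputable def carlitz (F : Type) [Field F] [Fintype F] (m : Polynomial F) :
    Polynomial (Polynomial F) :=
  m.sum fun i c => Polynomial.C (Polynomial.C c) * carlitzTpow F i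

/-- Evaluation `C_m(α) ∈ 𝔽_q[T]` of the Carlitz polynomial `C_m(x)` at `α ∈ 𝔽_q[T]`. -/
noncomputable def carlitzEval (F : Type) [Field F] [Fintype F] (m α : Polynomial F) :
    Polynomial F :=
  (carlitz F m).eval α

open Finset

section Carlitz

variable (F : Type) [Field F] [Fintype F]

local notation "q" => Fintype.card F

theorem add_pow_card {R : Type*} [CommRing R] [Algebra F R] (x y : R) :
    (x + y) ^ q = x ^ q + y ^ q :=
  map_add (FiniteField.frobeniusAlgHom F R) x y

theorem add_pow_card_pow {R : Type*} [CommRing R] [Algebra F R] (x y : R) (i : ℕ) :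
    (x + y) ^ q ^ i = x ^ q ^ i + y ^ q ^ i := by
  induction i with
  | zero => simp
  | succ i ih => simp only [pow_succ, pow_mul, ih, add_pow_card]

/-- The coefficient of `x ^ q ^ i` in `C_{T^k}(x)`; the recursion comes from
`C_{T^(k+1)}(x) = C_{T^k}(T x + x ^ q)`. -/
noncomputable def carlitzTpowCoeff : ℕ → ℕ → F[X]
  | 0, 0 => 1
  | 0, _ + 1 => 0
  | k + 1, 0 => X * carlitzTpowCoeff k 0
  | k + 1, i + 1 => X ^ q ^ (i + 1) * carlitzTpowCoeff k (i + 1) + carlitzTpowCoeff k i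

theorem carlitzTpowCoeff_succ_succ (k i : ℕ) :
    carlitzTpowCoeff F (k + 1) (i + 1) =
      X ^ q ^ (i + 1) * carlitzTpowCoeff F k (i + 1) + carlitzTpowCoeff F k i :=
  rfl

theorem carlitzTpowCoeff_eq_zero_of_lt : ∀ {k i : ℕ}, k < i → carlitzTpowCoeff F k i = 0
  | 0, _ + 1, _ => rfl
  | k + 1, i + 1, h => by
    rw [carlitzTpowCoeff_succ_succ, carlitzTpowCoeff_eq_zero_of_lt (by omega : k < i + 1),
      carlitzTpowCoeff_eq_zero_of_lt (by omega : k < i), mul_zero, add_zero]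

theorem carlitzTpowCoeff_zero_right : ∀ k : ℕ, carlitzTpowCoeff F k 0 = X ^ k
  | 0 => rfl
  | k + 1 => by rw [carlitzTpowCoeff, carlitzTpowCoeff_zero_right k, pow_succ']

theorem carlitzTpowCoeff_self : ∀ k : ℕ, carlitzTpowCoeff F k k = 1
  | 0 => rfl
  | k + 1 => by
    rw [carlitzTpowCoeff_succ_succ, carlitzTpowCoeff_eq_zero_of_lt F (Nat.lt_succ_self k),
      carlitzTpowCoeff_self k, mul_zero, zero_add]

/-- The recursion coming instead from `C_{T^(k+1)}(x) = T C_{T^k}(x) + C_{T^k}(x) ^ q`. -/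
theorem carlitzTpowCoeff_succ_succ' (k i : ℕ) :
    carlitzTpowCoeff F (k + 1) (i + 1) =
      X * carlitzTpowCoeff F k (i + 1) + carlitzTpowCoeff F k i ^ q := by
  have hq : q ≠ 0 := Fintype.card_ne_zero
  induction k generalizing i with
  | zero => cases i <;> simp [carlitzTpowCoeff, hq]
  | succ k ih =>
    cases i with
    | zero =>
      conv_rhs => rw [carlitzTpowCoeff_succ_succ]
      rw [carlitzTpowCoeff_succ_succ, ih]
      simp only [carlitzTpowCoeff_zero_right]
      ring
    | succ i =>
      conv_rhs => rw [carlitzTpowCoeff_succ_succ F k (i + 1), carlitzTpowCoeff_succ_succ F k i]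
      rw [carlitzTpowCoeff_succ_succ, ih, ih, add_pow_card F]
      ring

theorem carlitzTpowCoeff_pow_card_sub (k i : ℕ) :
    carlitzTpowCoeff F k i ^ q - carlitzTpowCoeff F k i =
      (X ^ q ^ (i + 1) - X) * carlitzTpowCoeff F k (i + 1) := by
  linear_combination (carlitzTpowCoeff_succ_succ' F k i).symm + carlitzTpowCoeff_succ_succ F k i

theorem eval_carlitzTpow (α : F[X]) {k N : ℕ} (hkN : k < N) :
    (carlitzTpow F k).eval α = ∑ i ∈ range N, carlitzTpowCoeff F k i * α ^ q ^ i := by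
  obtain ⟨N, rfl⟩ : ∃ N', N = N' + 1 := ⟨N - 1, by omega⟩
  induction k generalizing α N with
  | zero =>
    rw [sum_range_succ']
    simp [carlitzTpow, carlitzTpowCoeff]
  | succ k ih =>
    have hterm : ∀ i, carlitzTpowCoeff F k i * (X * α + α ^ q) ^ q ^ i =
        X ^ q ^ i * carlitzTpowCoeff F k i * α ^ q ^ i +
          carlitzTpowCoeff F k i * α ^ q ^ (i + 1) := by
      intro i
      rw [add_pow_card_pow F, mul_pow, ← pow_mul, ← pow_succ']
      ring
    have hcomp : (carlitzTpow F (k + 1)).eval α = (carlitzTpow F k).eval (X * α + α ^ q) := by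
      simp [carlitzTpow, eval_comp]
    rw [hcomp, ih _ N (by omega), sum_congr rfl fun i _ => hterm i, sum_add_distrib,
      sum_range_succ' (fun i => X ^ q ^ i * carlitzTpowCoeff F k i * α ^ q ^ i),
      sum_range_succ (fun i => carlitzTpowCoeff F k i * α ^ q ^ (i + 1)),
      sum_range_succ' (fun i => carlitzTpowCoeff F (k + 1) i * α ^ q ^ i),
      carlitzTpowCoeff_eq_zero_of_lt F (by omega : k < N)]
    simp only [carlitzTpowCoeff_succ_succ, carlitzTpowCoeff_zero_right, add_mul, sum_add_distrib]
    ring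

variable {F}

noncomputable def carlitzCoeff (m : F[X]) (i : ℕ) : F[X] :=
  ∑ k ∈ range (m.natDegree + 1), m.coeff k • carlitzTpowCoeff F k i

theorem carlitzEval_eq_sum (m α : F[X]) :
    carlitzEval F m α = ∑ i ∈ range (m.natDegree + 1), carlitzCoeff m i * α ^ q ^ i := by
  rw [carlitzEval, carlitz, sum_over_range _ (by simp), eval_finsetSum]
  simp only [carlitzCoeff, sum_mul, eval_mul, eval_C, smul_mul_assoc]
  rw [sum_comm]
  refine sum_congr rfl fun k hk => ?_
  rw [eval_carlitzTpow F α (mem_range.1 hk), mul_sum]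
  simp only [smul_eq_C_mul]

theorem carlitz_add (m m' : F[X]) : carlitz F (m + m') = carlitz F m + carlitz F m' :=
  sum_add_index _ _ _ (by simp) (by simp [add_mul])

theorem carlitz_one : carlitz F 1 = X := by
  rw [carlitz, ← C_1, sum_C_index (by simp)]
  simp [carlitzTpow]

theorem carlitzCoeff_zero_right (m : F[X]) : carlitzCoeff m 0 = m := by
  simp only [carlitzCoeff, carlitzTpowCoeff_zero_right, smul_eq_C_mul]
  exact (as_sum_range_C_mul_X_pow m).symm

theorem carlitzCoeff_natDegree (m : F[X]) : carlitzCoeff m m.natDegree = C m.leadingCoeff := by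
  rw [carlitzCoeff, sum_range_succ, sum_eq_zero, carlitzTpowCoeff_self, zero_add, smul_eq_C_mul,
    mul_one, leadingCoeff]
  intro k hk
  rw [carlitzTpowCoeff_eq_zero_of_lt F (mem_range.1 hk), smul_zero]

theorem carlitzCoeff_pow_card_sub (m : F[X]) (i : ℕ) :
    carlitzCoeff m i ^ q - carlitzCoeff m i = (X ^ q ^ (i + 1) - X) * carlitzCoeff m (i + 1) := by
  have hfrob := map_sum (FiniteField.frobeniusAlgHom F F[X])
    (fun k => m.coeff k • carlitzTpowCoeff F k i) (range (m.natDegree + 1))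
  simp only [map_smul, FiniteField.coe_frobeniusAlgHom] at hfrob
  rw [carlitzCoeff, hfrob, ← sum_sub_distrib, carlitzCoeff, mul_sum]
  simp only [← smul_sub, carlitzTpowCoeff_pow_card_sub, mul_smul_comm]

theorem natDegree_carlitzCoeff {m : F[X]} {i : ℕ} (hi : i < m.natDegree) :
    (carlitzCoeff m i).natDegree = (m.natDegree - i) * q ^ i := by
  induction i with
  | zero => simp [carlitzCoeff_zero_right]
  | succ i ih =>
    have hq : 1 < q := Fintype.one_lt_card
    set a := carlitzCoeff m i
    have ha : a.natDegree = (m.natDegree - (i + 1) + 1) * q ^ i := by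
      rw [ih (by omega)]; congr 1; omega
    have hsub : (a ^ q - a).natDegree = q * a.natDegree := by
      rw [natDegree_sub_eq_left_of_natDegree_lt] <;> rw [natDegree_pow]
      exact lt_mul_left (by rw [ha]; positivity) hq
    have hne : carlitzCoeff m (i + 1) ≠ 0 := by
      intro h0
      rw [carlitzCoeff_pow_card_sub, h0, mul_zero, natDegree_zero, ha] at hsub
      have : 0 < q ^ i := by positivity
      nlinarith
    have hdeg := congrArg natDegree (carlitzCoeff_pow_card_sub m i)
    rw [hsub, natDegree_mul (FiniteField.X_pow_card_pow_sub_X_ne_zero F (by omega) hq) hne,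
      FiniteField.X_pow_card_pow_sub_X_natDegree_eq F (by omega) hq, ha, pow_succ] at hdeg
    rw [pow_succ]
    linarith

theorem dvd_carlitzCoeff {P : F[X]} (hP : Irreducible P) {i : ℕ} (hi : i < P.natDegree) :
    P ∣ carlitzCoeff P i := by
  induction i with
  | zero => rw [carlitzCoeff_zero_right]
  | succ i ih =>
    have hX : ¬P ∣ X ^ q ^ (i + 1) - X := fun h =>
      absurd (Nat.le_of_dvd (by omega) (hP.natDegree_dvd_of_dvd_X_pow_card_pow_sub_X (n := i + 1)
        (by rwa [Nat.card_eq_fintype_card]))) (by omega)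
    have hmul : P ∣ (X ^ q ^ (i + 1) - X) * carlitzCoeff P (i + 1) := by
      have hPi := ih (by omega)
      rw [← carlitzCoeff_pow_card_sub]
      exact dvd_sub (dvd_pow hPi Fintype.card_ne_zero) hPi
    exact (hP.prime.dvd_or_dvd hmul).resolve_left hX

theorem dvd_carlitzEval_one_sub_one {P : F[X]} (hm : P.Monic) (hP : Irreducible P) :
    P ∣ carlitzEval F P 1 - 1 := by
  rw [carlitzEval_eq_sum, sum_range_succ, carlitzCoeff_natDegree, hm.leadingCoeff, C_1, one_pow,
    mul_one, add_sub_cancel_right]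
  exact dvd_sum fun i hi => dvd_mul_of_dvd_left (dvd_carlitzCoeff hP (mem_range.1 hi)) _

theorem succ_lt_pow {b j : ℕ} (hb : 2 < b) (hj : 0 < j) : j + 1 < b ^ j :=
  calc j + 1 ≤ 2 ^ j := Nat.lt_two_pow_self
    _ < b ^ j := Nat.pow_lt_pow_left hb hj.ne'

theorem natDegree_carlitzEval_one (hq : 2 < q) {m : F[X]} (hm : 0 < m.natDegree) :
    (carlitzEval F m 1).natDegree = q ^ (m.natDegree - 1) := by
  obtain ⟨k, hk⟩ : ∃ k, m.natDegree = k + 1 := ⟨m.natDegree - 1, by omega⟩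
  have hlow : (∑ i ∈ range k, carlitzCoeff m i + carlitzCoeff m (k + 1)).natDegree < q ^ k := by
    have hbound : ∀ i ∈ range k, (carlitzCoeff m i).natDegree ≤ q ^ k - 1 := by
      intro i hi
      have hik := mem_range.1 hi
      rw [natDegree_carlitzCoeff (by omega), hk]
      have hlt : (k + 1 - i) * q ^ i < q ^ k := calc
        (k + 1 - i) * q ^ i = (k - i + 1) * q ^ i := by congr 1; omega
        _ < q ^ (k - i) * q ^ i := by gcongr; exact succ_lt_pow hq (by omega)
        _ = q ^ k := by rw [← pow_add]; congr 1; omega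
      omega
    have hpos : 0 < q ^ k := by positivity
    calc _ ≤ max _ _ := natDegree_add_le _ _
      _ ≤ q ^ k - 1 := by
        rw [← hk, carlitzCoeff_natDegree, natDegree_C]
        exact max_le (natDegree_sum_le_of_forall_le _ _ hbound) (Nat.zero_le _)
      _ < q ^ k := by omega
  have htop : (carlitzCoeff m k).natDegree = q ^ k := by
    rw [natDegree_carlitzCoeff (by omega), hk]; simp
  rw [carlitzEval_eq_sum, hk, sum_range_succ, sum_range_succ]
  simp only [one_pow, mul_one]
  rw [add_right_comm, add_comm, natDegree_add_eq_left_of_natDegree_lt (htop ▸ hlow), htop]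
  simp

end Carlitz

theorem mersenne_composite_of_twin_primes_general (F : Type) [Field F] [Fintype F]
    (hq : 2 < Fintype.card F)
    (℘ : Polynomial F) (n : ℕ)
    (hPm : (℘ + 1).Monic) (hPirr : Irreducible (℘ + 1))
    (hn : ℘.natDegree = n) (hn2 : 2 ≤ n) :
    (℘ + 1) ∣ carlitzEval F ℘ 1 ∧ ¬Irreducible (carlitzEval F ℘ 1) := by
  have hdeg : (℘ + 1).natDegree = n := by rw [← C_1, natDegree_add_C, hn]
  have hdvd : ℘ + 1 ∣ carlitzEval F ℘ 1 := by
    simpa [carlitzEval, carlitz_add, carlitz_one] using dvd_carlitzEval_one_sub_one hPm hPirr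
  refine ⟨hdvd, fun hirr => ?_⟩
  have hdeg_eq := natDegree_eq_of_degree_eq <|
    degree_eq_degree_of_associated (hPirr.associated_of_dvd hirr hdvd)
  rw [hdeg, natDegree_carlitzEval_one hq (by omega), hn] at hdeg_eq
  have := succ_lt_pow hq (by omega : 0 < n - 1)
  omega

/-- For `q > 2`: if `℘` and `P = ℘ + 1` are both monic irreducible of degree `n ≥ 2`,
then `P` divides `C_℘(1)` and `C_℘(1)` is not irreducible. -/
theorem mersenne_composite_of_twin_primes (F : Type) [Field F] [Fintype F]
    (hq : 2 < Fintype.card F)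
    (℘ : Polynomial F) (n : ℕ) (h℘m : ℘.Monic) (h℘irr : Irreducible ℘)
    (hPm : (℘ + 1).Monic) (hPirr : Irreducible (℘ + 1))
    (hn : ℘.natDegree = n) (hn2 : 2 ≤ n) :
    (℘ + 1) ∣ carlitzEval F ℘ 1 ∧ ¬Irreducible (carlitzEval F ℘ 1) :=
  mersenne_composite_of_twin_primes_general F hq ℘ n hPm hPirr hn hn2
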